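/- The automorphism Ψ maps the ideal of F_S generated by the entries of the two matrices τ(Â) − Λ_mat·Φ^L_w·τ(A) and τ(A) − τ(Â)·Φ^R_w·Λ_mat^{−1} onto the ideal of F_S generated by the entries of the two matrices g·τ(Â) + Λ'·Φ^L_w·τ(A) and τ(A) + g·τ(Â)·Φ^R_w·(Λ')^{−1}. (Thus, after the substitution τ, the defining relations (KCH2)–(KCH3) of degree-0 abelianized knot contact homology are carried by Ψ to the modified relations −gÂ = Λ'Φ^L A and A = −gÂΦ^R(Λ')^{−1}.) -/

import Mathlib

/-!
STATEMENT 13: The automorphism `Ψ` maps the ideal of `F_S` generated by the entries of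
the two matrices `τ(Â) − Λ_mat·Φ^L_w·τ(A)` and `τ(A) − τ(Â)·Φ^R_w·Λ_mat^{−1}` onto the
ideal generated by the entries of `g·τ(Â) + Λ'·Φ^L_w·τ(A)` and
`τ(A) + g·τ(Â)·Φ^R_w·(Λ')^{−1}`.

Setup (0-indexed, the strand `1` of the paper corresponding to `⟨0, _⟩ : Fin n`):
`S = ℂ[ν^{±1}, Λ^{±1}, g^{±1}]` is modeled as `AddMonoidAlgebra ℂ (Fin 3 →₀ ℤ)` with
`ν = x₀, Λ = x₁, g = x₂`; `F_S` is the polynomial ring over `S` in the variables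
`a_{ij}`, `i ≠ j ∈ Fin n`.  The matrices `τ(A)`, `τ(Â)`, `Φ^L_w`, `Φ^R_w` are written
directly over `F_S` (τ fixes the variables `a_{ij}`, and `Φ^L_w`, `Φ^R_w` have integer
coefficients in the `a_{ij}`).  A positive braid word is a list of generator indices `k`
with `k + 1 < n`; its writhe is `wr = ℓ`, its length.  The hypothesis that `π(w)` is an
`n`-cycle is expressed by transitivity of its powers; `d(i)` is the least `k ≥ 0` with
`π(w)^k(i) = 1` (via `Nat.find`), and `Ψ(a_{ij}) = (−g)^{d(i)−d(j)}·a_{ij}`.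
`Λ_mat = diag(−Λ^{−1}ν^{−2wr}g^{wr−n}, 1, …, 1)` and
`Λ' = diag(Λ^{−1}ν^{−2wr}(−g)^{wr}, 1, …, 1)`, with their explicit diagonal inverses.
-/

noncomputable section

/-- The Laurent polynomial ring `S = ℂ[ν^{±1}, Λ^{±1}, g^{±1}]`. -/
abbrev S : Type := AddMonoidAlgebra ℂ (Fin 3 →₀ ℤ)

/-- The Laurent monomial `c·ν^{e₀}·Λ^{e₁}·g^{e₂}`. -/
def mono (e0 e1 e2 : ℤ) (c : ℂ) : S :=
  AddMonoidAlgebra.single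
    (Finsupp.single 0 e0 + Finsupp.single 1 e1 + Finsupp.single 2 e2) c

/-- The Laurent monomial `(−g)^m`, for `m : ℤ`. -/
def ngpow (m : ℤ) : S := mono 0 0 m (if Even m then 1 else -1)

/-- The index set of the variables `a_{ij}`, `i ≠ j`. -/
abbrev Vars (n : ℕ) := {p : Fin n × Fin n // p.1 ≠ p.2}

/-- The polynomial ring `F_S` over `S` in the variables `a_{ij}`. -/
abbrev FS (n : ℕ) := MvPolynomial (Vars n) S

/-- The generator `a_{ij}` (junk value `0` if `i = j`; all uses below have `i ≠ j`). -/
def av (n : ℕ) (i j : Fin n) : FS n :=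
  if h : i ≠ j then MvPolynomial.X ⟨(i, j), h⟩ else 0

/-- The image of the generator `a_{ij}` under `φ_{σ_k}`, where `K, K1` stand for the
strands `k, k+1`. -/
def phiGen (n : ℕ) (K K1 : Fin n) (i j : Fin n) : FS n :=
  if i = K ∧ j = K1 then -(av n K1 K)
  else if i = K1 ∧ j = K then -(av n K K1)
  else if i = K then av n K1 j - av n K1 K * av n K j
  else if i = K1 then av n K j
  else if j = K then av n i K1 - av n i K * av n K K1
  else if j = K1 then av n i K
  else av n i j

/-- The algebra endomorphism `φ_{σ_k}`. -/
def phi (n : ℕ) (K K1 : Fin n) : FS n →ₐ[S] FS n :=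
  MvPolynomial.aeval fun v => phiGen n K K1 v.1.1 v.1.2

/-- The permutation `π(w) = s_{k₁} ∘ ⋯ ∘ s_{k_ℓ}` of a positive braid word. -/
def permWord (n : ℕ) : List {k : ℕ // k + 1 < n} → Equiv.Perm (Fin n)
  | [] => 1
  | k :: w => Equiv.swap ⟨k.1, by have := k.2; omega⟩ ⟨k.1 + 1, k.2⟩ * permWord n w

/-- The matrix `Φ^L_{σ_k}`. -/
def PhiLgen (n : ℕ) (K K1 : Fin n) : Matrix (Fin n) (Fin n) (FS n) :=
  Matrix.of fun i j =>
    if i = K ∧ j = K then -(av n K1 K)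
    else if i = K ∧ j = K1 then 1
    else if i = K1 ∧ j = K then 1
    else if i = K1 ∧ j = K1 then 0
    else if i = j then 1 else 0

/-- The matrix `Φ^R_{σ_k}`. -/
def PhiRgen (n : ℕ) (K K1 : Fin n) : Matrix (Fin n) (Fin n) (FS n) :=
  Matrix.of fun i j =>
    if i = K ∧ j = K then -(av n K K1)
    else if i = K ∧ j = K1 then 1
    else if i = K1 ∧ j = K then 1
    else if i = K1 ∧ j = K1 then 0
    else if i = j then 1 else 0

/-- `Φ^L` of the empty word is the identity, and `Φ^L_{σ_k w'} = φ_{σ_k}(Φ^L_{w'})·Φ^L_{σ_k}`. -/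
def PhiL (n : ℕ) : List {k : ℕ // k + 1 < n} → Matrix (Fin n) (Fin n) (FS n)
  | [] => 1
  | k :: w =>
      (PhiL n w).map (phi n ⟨k.1, by have := k.2; omega⟩ ⟨k.1 + 1, k.2⟩) *
        PhiLgen n ⟨k.1, by have := k.2; omega⟩ ⟨k.1 + 1, k.2⟩

/-- `Φ^R` of the empty word is the identity, and `Φ^R_{σ_k w'} = Φ^R_{σ_k}·φ_{σ_k}(Φ^R_{w'})`. -/
def PhiR (n : ℕ) : List {k : ℕ // k + 1 < n} → Matrix (Fin n) (Fin n) (FS n)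
  | [] => 1
  | k :: w =>
      PhiRgen n ⟨k.1, by have := k.2; omega⟩ ⟨k.1 + 1, k.2⟩ *
        (PhiR n w).map (phi n ⟨k.1, by have := k.2; omega⟩ ⟨k.1 + 1, k.2⟩)

/-- The matrix `τ(A)`, with diagonal entries `1 − ν^{−2}`, entries `a_{ij}` for `i < j`
and `−ν^{−2}·a_{ij}` for `i > j`. -/
def AS (n : ℕ) : Matrix (Fin n) (Fin n) (FS n) :=
  Matrix.of fun i j =>
    if i = j then 1 - MvPolynomial.C (mono (-2) 0 0 1)
    else if i < j then av n i j
    else -(MvPolynomial.C (mono (-2) 0 0 1) * av n i j)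

/-- The matrix `τ(Â)`, with diagonal entries `g^{−2} − ν^{−2}`, entries `g^{−2}·a_{ij}`
for `i < j` and `−ν^{−2}·a_{ij}` for `i > j`. -/
def AhatS (n : ℕ) : Matrix (Fin n) (Fin n) (FS n) :=
  Matrix.of fun i j =>
    if i = j then MvPolynomial.C (mono 0 0 (-2) 1) - MvPolynomial.C (mono (-2) 0 0 1)
    else if i < j then MvPolynomial.C (mono 0 0 (-2) 1) * av n i j
    else -(MvPolynomial.C (mono (-2) 0 0 1) * av n i j)

/-- `Λ_mat = diag(−Λ^{−1}ν^{−2wr}g^{wr−n}, 1, …, 1)`. -/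
def Lmat (n : ℕ) (wr : ℤ) : Matrix (Fin n) (Fin n) (FS n) :=
  Matrix.diagonal fun i =>
    if (i : ℕ) = 0 then MvPolynomial.C (mono (-2 * wr) (-1) (wr - n) (-1)) else 1

/-- `Λ_mat^{−1} = diag(−Λν^{2wr}g^{n−wr}, 1, …, 1)`. -/
def LmatInv (n : ℕ) (wr : ℤ) : Matrix (Fin n) (Fin n) (FS n) :=
  Matrix.diagonal fun i =>
    if (i : ℕ) = 0 then MvPolynomial.C (mono (2 * wr) 1 ((n : ℤ) - wr) (-1)) else 1

/-- `Λ' = diag(Λ^{−1}ν^{−2wr}(−g)^{wr}, 1, …, 1)`. -/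
def Lp (n : ℕ) (wr : ℤ) : Matrix (Fin n) (Fin n) (FS n) :=
  Matrix.diagonal fun i =>
    if (i : ℕ) = 0 then
      MvPolynomial.C (mono (-2 * wr) (-1) wr (if Even wr then 1 else -1)) else 1

/-- `(Λ')^{−1} = diag(Λν^{2wr}(−g)^{−wr}, 1, …, 1)`. -/
def LpInv (n : ℕ) (wr : ℤ) : Matrix (Fin n) (Fin n) (FS n) :=
  Matrix.diagonal fun i =>
    if (i : ℕ) = 0 then
      MvPolynomial.C (mono (2 * wr) 1 (-wr) (if Even wr then 1 else -1)) else 1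

/-- The `S`-algebra automorphism `Ψ` with `Ψ(a_{ij}) = (−g)^{d(i)−d(j)}·a_{ij}`. -/
def Psi (n : ℕ) (d : Fin n → ℤ) : FS n →ₐ[S] FS n :=
  MvPolynomial.aeval fun v =>
    MvPolynomial.C (ngpow (d v.1.1 - d v.1.2)) * MvPolynomial.X v

/-- The element `g` of `F_S`. -/
def gElt (n : ℕ) : FS n := MvPolynomial.C (mono 0 0 1 1)

/-- The ideal of `F_S` generated by all entries of two matrices. -/
def entriesIdeal (n : ℕ) (M N : Matrix (Fin n) (Fin n) (FS n)) : Ideal (FS n) :=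
  Ideal.span ({x | ∃ i j, x = M i j} ∪ {x | ∃ i j, x = N i j})

/-!
`Ψ_d` rescales `a_{ij}` by `(−g)^{d i − d j}`, so on `τ(A)` and `τ(Â)` it is conjugation by
`D_d = diag((−g)^{d i})`. As `φ_{σ_k}` relabels the strands `k, k+1`,
`Ψ_d ∘ φ_{σ_k} = φ_{σ_k} ∘ Ψ_{d ∘ s_k}`, and induction on the word gives
`Ψ_d(Φ^L_w) = D_{d∘π} Φ^L_w D_d⁻¹` and `Ψ_d(Φ^R_w) = D_d Φ^R_w D_{d∘π}⁻¹`.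
For `d` the distance to strand `1` along the `n`-cycle `π`, `d ∘ π = d − 1` except at strand `1`,
where it jumps by `n − 1`; with `wr ≡ n − 1 (mod 2)` (the sign of `π` computed twice) this gives
`Λ_mat D_{d∘π} = −g⁻¹ D_d Λ'`. Hence `Ψ` sends the two old relation matrices to
`g⁻¹ D_d (g·τ(Â) + Λ'Φ^L_w τ(A)) D_d⁻¹` and `D_d (τ(A) + g·τ(Â)Φ^R_w Λ'⁻¹) D_d⁻¹`, whose entries
are unit multiples of the new relations.
-/

lemma Matrix.map_algHom_mul {m R A B : Type*} [Fintype m] [CommSemiring R] [Semiring A]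
    [Semiring B] [Algebra R A] [Algebra R B] (φ : A →ₐ[R] B) (M N : Matrix m m A) :
    (M * N).map φ = M.map φ * N.map φ :=
  Matrix.map_mul (f := φ.toRingHom)

namespace Equiv.Perm

variable {α : Type*} {σ : Perm α}

lemma isCycleOn_univ_of_exists_pow (h : ∀ i j, ∃ m : ℕ, (σ ^ m) i = j) :
    σ.IsCycleOn .univ :=
  ⟨σ.bijective.bijOn_univ, fun i _ j _ =>
    let ⟨m, hm⟩ := h i j
    ⟨m, by simpa using hm⟩⟩

lemma IsCycleOn.pow_apply_eq_self_iff_card_dvd [Fintype α] (hσ : σ.IsCycleOn .univ) (z : α)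
    (m : ℕ) : (σ ^ m) z = z ↔ Fintype.card α ∣ m := by
  rw [← Finset.coe_univ] at hσ
  exact hσ.pow_apply_eq (Finset.mem_univ z)

lemma IsCycleOn.sign_of_univ [Fintype α] [DecidableEq α] (hσ : σ.IsCycleOn .univ)
    (hcard : 2 ≤ Fintype.card α) : sign σ = -(-1) ^ Fintype.card α := by
  have hfix : ∀ i, σ i ≠ i := fun i hi => by
    have := Nat.le_of_dvd one_pos ((hσ.pow_apply_eq_self_iff_card_dvd i 1).mp (by simpa using hi))
    omega
  obtain ⟨z⟩ : Nonempty α := Fintype.card_pos_iff.mp (by omega)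
  have hcyc : σ.IsCycle := ⟨z, hfix z, fun y _ => hσ.2 (Set.mem_univ z) (Set.mem_univ y)⟩
  have hsupp : σ.support = Finset.univ :=
    Finset.eq_univ_of_forall fun i => mem_support.mpr (hfix i)
  rw [hcyc.sign, hsupp, Finset.card_univ]

variable [DecidableEq α]

lemma find_pow_apply_add_one {i z : α} (hi : i ≠ z) (h₁ : ∃ m, (σ ^ m) (σ i) = z)
    (h₂ : ∃ m, (σ ^ m) i = z) : Nat.find h₁ + 1 = Nat.find h₂ := by
  refine le_antisymm ?_ (Nat.find_le (by rw [pow_succ, mul_apply]; exact Nat.find_spec h₁))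
  have hspec := Nat.find_spec h₂
  obtain ⟨k, hk⟩ : ∃ k, Nat.find h₂ = k + 1 :=
    Nat.exists_eq_add_one_of_ne_zero fun h0 => hi (by simpa [h0] using hspec)
  rw [hk, pow_succ, mul_apply] at hspec
  rw [hk]
  exact Nat.succ_le_succ (Nat.find_le hspec)

lemma IsCycleOn.find_pow_apply_self_add_one [Fintype α] (hσ : σ.IsCycleOn .univ) (z : α)
    (h : ∃ m, (σ ^ m) (σ z) = z) : Nat.find h + 1 = Fintype.card α := by
  have hcard : 0 < Fintype.card α := Fintype.card_pos_iff.mpr ⟨z⟩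
  have hiff : ∀ m, (σ ^ m) (σ z) = z ↔ Fintype.card α ∣ m + 1 := fun m => by
    rw [← mul_apply, ← pow_succ, hσ.pow_apply_eq_self_iff_card_dvd]
  suffices Nat.find h = Fintype.card α - 1 by omega
  simp only [Nat.find_eq_iff, hiff, Nat.sub_add_cancel hcard, dvd_rfl, true_and]
  intro m hm hdvd
  have := Nat.le_of_dvd m.succ_pos hdvd
  omega

end Equiv.Perm

namespace KCH

open MvPolynomial Matrix Equiv

lemma mono_mul (a b c : ℤ) (x : ℂ) (a' b' c' : ℤ) (y : ℂ) :
    mono a b c x * mono a' b' c' y = mono (a + a') (b + b') (c + c') (x * y) := by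
  rw [mono, mono, AddMonoidAlgebra.single_mul_single, mono]
  congr 1
  simp only [Finsupp.single_add]
  abel

lemma mono_neg (a b c : ℤ) (x : ℂ) : mono a b c (-x) = -mono a b c x :=
  AddMonoidAlgebra.single_neg _ _

lemma mono_congr {a b c a' b' c' : ℤ} {x x' : ℂ} (ha : a = a') (hb : b = b') (hc : c = c')
    (hx : x = x') : mono a b c x = mono a' b' c' x' := by
  rw [ha, hb, hc, hx]

lemma mono_zero_one : mono 0 0 0 1 = 1 := by
  simp [mono, AddMonoidAlgebra.one_def]

lemma ngpow_zero : ngpow 0 = 1 := by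
  simpa [ngpow] using mono_zero_one

lemma ngpow_add (a b : ℤ) : ngpow (a + b) = ngpow a * ngpow b := by
  rw [ngpow, ngpow, ngpow, mono_mul]
  refine mono_congr (by ring) (by ring) rfl ?_
  by_cases ha : Even a <;> by_cases hb : Even b <;> simp [Int.even_add, ha, hb]

lemma ngpow_sub_one (m : ℤ) : ngpow (m - 1) = -(mono 0 0 (-1) 1 * ngpow m) := by
  rw [ngpow, ngpow, mono_mul, ← mono_neg]
  refine mono_congr (by ring) (by ring) (by ring) ?_
  by_cases hm : Even m <;> simp [hm]

lemma ngpow_add_one (m : ℤ) : ngpow (m + 1) = -(mono 0 0 1 1 * ngpow m) := by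
  rw [ngpow, ngpow, mono_mul, ← mono_neg]
  refine mono_congr (by ring) (by ring) (by ring) ?_
  by_cases hm : Even m <;> simp [hm]

lemma isUnit_ngpow (m : ℤ) : IsUnit (ngpow m) :=
  .of_mul_eq_one (ngpow (-m)) (by rw [← ngpow_add, add_neg_cancel, ngpow_zero])

lemma mono_gInv_mul_g : mono 0 0 (-1) 1 * mono 0 0 1 1 = 1 := by
  simpa [mono_mul] using mono_zero_one

variable {n : ℕ}

/-- The matrix `D_e` of the proof sketch above. -/
def ngDiag (n : ℕ) (e : Fin n → ℤ) : Matrix (Fin n) (Fin n) (FS n) :=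
  diagonal fun i => C (ngpow (e i))

lemma ngDiag_mul_ngDiag (e f : Fin n → ℤ) : ngDiag n e * ngDiag n f = ngDiag n (e + f) := by
  simp only [ngDiag, diagonal_mul_diagonal, Pi.add_apply, ngpow_add, map_mul]

lemma ngDiag_zero : ngDiag n 0 = 1 := by
  simp [ngDiag, ngpow_zero]

lemma ngDiag_neg_mul_cancel (e : Fin n → ℤ) : ngDiag n (-e) * ngDiag n e = 1 := by
  rw [ngDiag_mul_ngDiag, neg_add_cancel, ngDiag_zero]

lemma ngDiag_mul_neg_cancel (e : Fin n → ℤ) : ngDiag n e * ngDiag n (-e) = 1 := by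
  rw [ngDiag_mul_ngDiag, add_neg_cancel, ngDiag_zero]

lemma ngDiag_neg_mul_cancel_left (e : Fin n → ℤ) (M : Matrix (Fin n) (Fin n) (FS n)) :
    ngDiag n (-e) * (ngDiag n e * M) = M := by
  rw [← Matrix.mul_assoc, ngDiag_neg_mul_cancel, Matrix.one_mul]

lemma ngDiag_mul_mul_ngDiag_apply (e f : Fin n → ℤ) (M : Matrix (Fin n) (Fin n) (FS n))
    (i j : Fin n) :
    (ngDiag n e * M * ngDiag n f) i j = C (ngpow (e i)) * M i j * C (ngpow (f j)) := by
  rw [ngDiag, ngDiag, mul_diagonal, diagonal_mul]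

lemma map_ngDiag (φ : FS n →ₐ[S] FS n) (e : Fin n → ℤ) : (ngDiag n e).map φ = ngDiag n e := by
  simp [ngDiag, diagonal_map]

lemma Psi_av (d : Fin n → ℤ) (i j : Fin n) :
    Psi n d (av n i j) = C (ngpow (d i - d j)) * av n i j := by
  unfold av
  split_ifs <;> simp [Psi]

lemma map_Psi_eq_ngDiag_conj {d e f : Fin n → ℤ} {M : Matrix (Fin n) (Fin n) (FS n)}
    (hM : ∀ i j, Psi n d (M i j) = C (ngpow (e i - f j)) * M i j) :
    M.map (Psi n d) = ngDiag n e * M * ngDiag n (-f) := by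
  refine Matrix.ext fun i j => ?_
  rw [map_apply, hM, ngDiag_mul_mul_ngDiag_apply, sub_eq_add_neg, ngpow_add, map_mul]
  exact mul_right_comm _ _ _

lemma map_Psi_AS (d : Fin n → ℤ) : (AS n).map (Psi n d) = ngDiag n d * AS n * ngDiag n (-d) :=
  map_Psi_eq_ngDiag_conj fun i j => by
    simp only [AS, of_apply]
    split_ifs with h
    · subst h; simp [ngpow_zero]
    · simp [Psi_av]
    · simp [Psi_av]
      ring

lemma map_Psi_AhatS (d : Fin n → ℤ) :
    (AhatS n).map (Psi n d) = ngDiag n d * AhatS n * ngDiag n (-d) :=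
  map_Psi_eq_ngDiag_conj fun i j => by
    simp only [AhatS, of_apply]
    split_ifs with h
    · subst h; simp [ngpow_zero]
    · simp [Psi_av]
      ring
    · simp [Psi_av]
      ring

lemma C_ngpow_sub_mul_C_ngpow_sub (d : Fin n → ℤ) (i j k : Fin n) :
    (C (ngpow (d i - d j)) * C (ngpow (d j - d k)) : FS n) = C (ngpow (d i - d k)) := by
  rw [← map_mul, ← ngpow_add, sub_add_sub_cancel]

lemma Psi_phiGen (d : Fin n → ℤ) {K K1 : Fin n} (hK : K ≠ K1) {i j : Fin n} (hij : i ≠ j) :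
    Psi n d (phiGen n K K1 i j) =
      C (ngpow (d (swap K K1 i) - d (swap K K1 j))) * phiGen n K K1 i j := by
  unfold phiGen
  split_ifs with h1 h2 h3 h4 h5 h6
  · obtain ⟨rfl, rfl⟩ := h1
    simp only [map_neg, Psi_av, swap_apply_left, swap_apply_right]
    ring
  · obtain ⟨rfl, rfl⟩ := h2
    simp only [map_neg, Psi_av, swap_apply_left, swap_apply_right]
    ring
  · subst h3
    have hjK1 : j ≠ K1 := fun h => h1 ⟨rfl, h⟩
    simp only [map_sub, map_mul, Psi_av, swap_apply_left, swap_apply_of_ne_of_ne hij.symm hjK1]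
    linear_combination -(av n K1 i * av n i j) * C_ngpow_sub_mul_C_ngpow_sub d K1 i j
  · subst h4
    have hjK : j ≠ K := fun h => h2 ⟨rfl, h⟩
    simp only [Psi_av, swap_apply_right, swap_apply_of_ne_of_ne hjK hij.symm]
  · subst h5
    simp only [map_sub, map_mul, Psi_av, swap_apply_left, swap_apply_of_ne_of_ne h3 h4]
    linear_combination -(av n i j * av n j K1) * C_ngpow_sub_mul_C_ngpow_sub d i j K1
  · subst h6
    simp only [Psi_av, swap_apply_right, swap_apply_of_ne_of_ne h3 h4]
  · simp only [Psi_av, swap_apply_of_ne_of_ne h3 h4, swap_apply_of_ne_of_ne h5 h6]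

lemma Psi_comp_phi (d : Fin n → ℤ) {K K1 : Fin n} (hK : K ≠ K1) :
    (Psi n d).comp (phi n K K1) = (phi n K K1).comp (Psi n (d ∘ swap K K1)) := by
  refine MvPolynomial.algHom_ext fun v => ?_
  simp only [AlgHom.comp_apply, Psi, phi, aeval_X, map_mul, aeval_C, algebraMap_eq]
  exact Psi_phiGen d hK v.2

lemma map_phi_map_Psi (d : Fin n → ℤ) {K K1 : Fin n} (hK : K ≠ K1)
    (M : Matrix (Fin n) (Fin n) (FS n)) :
    (M.map (phi n K K1)).map (Psi n d) = (M.map (Psi n (d ∘ swap K K1))).map (phi n K K1) := by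
  rw [Matrix.map_map, Matrix.map_map, ← AlgHom.coe_comp, ← AlgHom.coe_comp, Psi_comp_phi d hK]

lemma map_Psi_PhiLgen (d : Fin n → ℤ) (K K1 : Fin n) :
    (PhiLgen n K K1).map (Psi n d) =
      ngDiag n (d ∘ swap K K1) * PhiLgen n K K1 * ngDiag n (-d) :=
  map_Psi_eq_ngDiag_conj fun i j => by
    simp only [PhiLgen, of_apply, Function.comp_apply]
    split_ifs with h1 h2 h3 h4 h5
    · obtain ⟨rfl, rfl⟩ := h1
      simp only [swap_apply_left, map_neg, Psi_av]
      ring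
    · obtain ⟨rfl, rfl⟩ := h2
      simp [ngpow_zero]
    · obtain ⟨rfl, rfl⟩ := h3
      simp [ngpow_zero]
    · simp
    · subst h5
      simp [swap_apply_of_ne_of_ne (fun h => h1 ⟨h, h⟩) (fun h => h4 ⟨h, h⟩), ngpow_zero]
    · simp

lemma map_Psi_PhiRgen (d : Fin n → ℤ) (K K1 : Fin n) :
    (PhiRgen n K K1).map (Psi n d) =
      ngDiag n d * PhiRgen n K K1 * ngDiag n (-(d ∘ swap K K1)) :=
  map_Psi_eq_ngDiag_conj fun i j => by
    simp only [PhiRgen, of_apply, Function.comp_apply]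
    split_ifs with h1 h2 h3 h4 h5
    · obtain ⟨rfl, rfl⟩ := h1
      simp only [swap_apply_left, map_neg, Psi_av]
      ring
    · obtain ⟨rfl, rfl⟩ := h2
      simp [ngpow_zero]
    · obtain ⟨rfl, rfl⟩ := h3
      simp [ngpow_zero]
    · simp
    · subst h5
      simp [swap_apply_of_ne_of_ne (fun h => h1 ⟨h, h⟩) (fun h => h4 ⟨h, h⟩), ngpow_zero]
    · simp

lemma map_Psi_PhiL (w : List {k : ℕ // k + 1 < n}) (d : Fin n → ℤ) :
    (PhiL n w).map (Psi n d) = ngDiag n (d ∘ permWord n w) * PhiL n w * ngDiag n (-d) := by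
  induction w generalizing d with
  | nil => simp [PhiL, permWord, ngDiag_mul_neg_cancel]
  | cons k w ih =>
    set K : Fin n := ⟨k.1, by have := k.2; omega⟩
    set K1 : Fin n := ⟨k.1 + 1, k.2⟩
    have hK : K ≠ K1 := by simp [K, K1, Fin.ext_iff]
    have hPhiL : PhiL n (k :: w) = (PhiL n w).map (phi n K K1) * PhiLgen n K K1 := rfl
    have hperm : d ∘ permWord n (k :: w) = (d ∘ swap K K1) ∘ permWord n w := rfl
    calc (PhiL n (k :: w)).map (Psi n d)
        = ((PhiL n w).map (Psi n (d ∘ swap K K1))).map (phi n K K1) *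
            (PhiLgen n K K1).map (Psi n d) := by
          rw [hPhiL, map_algHom_mul, map_phi_map_Psi d hK]
      _ = ngDiag n ((d ∘ swap K K1) ∘ permWord n w) * (PhiL n w).map (phi n K K1) *
            ngDiag n (-(d ∘ swap K K1)) *
            (ngDiag n (d ∘ swap K K1) * PhiLgen n K K1 * ngDiag n (-d)) := by
          rw [ih, map_algHom_mul, map_algHom_mul, map_ngDiag, map_ngDiag, map_Psi_PhiLgen]
      _ = ngDiag n (d ∘ permWord n (k :: w)) * PhiL n (k :: w) * ngDiag n (-d) := by
          simp only [hperm, hPhiL, Matrix.mul_assoc, ngDiag_neg_mul_cancel_left]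

lemma map_Psi_PhiR (w : List {k : ℕ // k + 1 < n}) (d : Fin n → ℤ) :
    (PhiR n w).map (Psi n d) = ngDiag n d * PhiR n w * ngDiag n (-(d ∘ permWord n w)) := by
  induction w generalizing d with
  | nil => simp [PhiR, permWord, ngDiag_mul_neg_cancel]
  | cons k w ih =>
    set K : Fin n := ⟨k.1, by have := k.2; omega⟩
    set K1 : Fin n := ⟨k.1 + 1, k.2⟩
    have hK : K ≠ K1 := by simp [K, K1, Fin.ext_iff]
    have hPhiR : PhiR n (k :: w) = PhiRgen n K K1 * (PhiR n w).map (phi n K K1) := rfl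
    have hperm : d ∘ permWord n (k :: w) = (d ∘ swap K K1) ∘ permWord n w := rfl
    calc (PhiR n (k :: w)).map (Psi n d)
        = (PhiRgen n K K1).map (Psi n d) *
            ((PhiR n w).map (Psi n (d ∘ swap K K1))).map (phi n K K1) := by
          rw [hPhiR, map_algHom_mul, map_phi_map_Psi d hK]
      _ = ngDiag n d * PhiRgen n K K1 * ngDiag n (-(d ∘ swap K K1)) *
            (ngDiag n (d ∘ swap K K1) * (PhiR n w).map (phi n K K1) *
              ngDiag n (-((d ∘ swap K K1) ∘ permWord n w))) := by
          rw [ih, map_algHom_mul, map_algHom_mul, map_ngDiag, map_ngDiag, map_Psi_PhiRgen]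
      _ = ngDiag n d * PhiR n (k :: w) * ngDiag n (-(d ∘ permWord n (k :: w))) := by
          simp only [hperm, hPhiR, Matrix.mul_assoc, ngDiag_neg_mul_cancel_left]

lemma Lmat_corner_mul_ngpow {N W : ℤ} (hpar : Odd (N + W)) :
    mono (-2 * W) (-1) (W - N) (-1) * ngpow N =
      mono (-2 * W) (-1) W (if Even W then 1 else -1) := by
  rw [ngpow, mono_mul]
  refine mono_congr (by ring) (by ring) (by ring) ?_
  rw [Int.odd_add] at hpar
  by_cases hW : Even W <;> simp [hW, hpar]

lemma LmatInv_corner_mul_ngpow {N W : ℤ} (hpar : Odd (N + W)) :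
    mono (2 * W) 1 (N - W) (-1) * ngpow (-N) =
      mono (2 * W) 1 (-W) (if Even W then 1 else -1) := by
  rw [ngpow, mono_mul]
  refine mono_congr (by ring) (by ring) (by ring) ?_
  rw [Int.odd_add] at hpar
  by_cases hW : Even W <;> simp [hW, hpar]

lemma Lmat_mul_ngDiag {W : ℤ} (hpar : Odd ((n : ℤ) + W)) {d e : Fin n → ℤ}
    (he : ∀ i : Fin n, e i = if (i : ℕ) = 0 then d i + (n - 1) else d i - 1) :
    Lmat n W * ngDiag n e = -((C (mono 0 0 (-1) 1) : FS n) • (ngDiag n d * Lp n W)) := by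
  rw [Lmat, Lp, ngDiag, ngDiag, diagonal_mul_diagonal, diagonal_mul_diagonal, ← diagonal_smul,
    diagonal_neg]
  congr 1
  funext i
  by_cases h0 : (i : ℕ) = 0 <;> simp only [Pi.smul_apply, he i, h0, ↓reduceIte]
  · have hcorner := congrArg (C : S → FS n) (Lmat_corner_mul_ngpow hpar)
    rw [map_mul] at hcorner
    simp only [ngpow_add, ngpow_sub_one, map_mul, map_neg, smul_eq_mul]
    linear_combination (-(C (mono 0 0 (-1) 1) * C (ngpow (d i)))) * hcorner
  · simp [ngpow_sub_one]

lemma ngDiag_neg_mul_LmatInv {W : ℤ} (hpar : Odd ((n : ℤ) + W)) {d e : Fin n → ℤ}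
    (he : ∀ i : Fin n, e i = if (i : ℕ) = 0 then d i + (n - 1) else d i - 1) :
    ngDiag n (-e) * LmatInv n W = -(gElt n • (LpInv n W * ngDiag n (-d))) := by
  rw [LmatInv, LpInv, ngDiag, ngDiag, diagonal_mul_diagonal, diagonal_mul_diagonal,
    ← diagonal_smul, diagonal_neg, gElt]
  congr 1
  funext i
  by_cases h0 : (i : ℕ) = 0 <;> simp only [Pi.neg_apply, Pi.smul_apply, he i, h0, ↓reduceIte]
  · have hcorner := congrArg (C : S → FS n) (LmatInv_corner_mul_ngpow hpar)
    rw [map_mul] at hcorner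
    rw [show -(d i + (n - 1)) = -d i + -n + 1 by ring, ngpow_add_one, ngpow_add]
    simp only [map_mul, map_neg, smul_eq_mul]
    linear_combination (-(C (mono 0 0 1 1) * C (ngpow (-d i)))) * hcorner
  · rw [show -(d i - 1) = -d i + 1 by ring]
    simp [ngpow_add_one]

lemma map_Lmat (φ : FS n →ₐ[S] FS n) (W : ℤ) : (Lmat n W).map φ = Lmat n W := by
  simp [Lmat, diagonal_map, apply_ite]

lemma map_LmatInv (φ : FS n →ₐ[S] FS n) (W : ℤ) : (LmatInv n W).map φ = LmatInv n W := by
  simp [LmatInv, diagonal_map, apply_ite]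

lemma map_entriesIdeal {F : Type*} [FunLike F (FS n) (FS n)] [RingHomClass F (FS n) (FS n)]
    (φ : F) (M N : Matrix (Fin n) (Fin n) (FS n)) :
    Ideal.map φ (entriesIdeal n M N) = entriesIdeal n (M.map φ) (N.map φ) := by
  rw [entriesIdeal, entriesIdeal, Ideal.map_span, Set.image_union]
  congr 2 <;> ext <;> simp [eq_comm]

lemma entriesIdeal_le_of_dvd {M N M' N' : Matrix (Fin n) (Fin n) (FS n)}
    (hM : ∀ i j, M' i j ∣ M i j) (hN : ∀ i j, N' i j ∣ N i j) :
    entriesIdeal n M N ≤ entriesIdeal n M' N' := by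
  refine Ideal.span_le.mpr ?_
  rintro x (⟨i, j, rfl⟩ | ⟨i, j, rfl⟩)
  · exact Ideal.mem_of_dvd _ (hM i j) (Ideal.subset_span (.inl ⟨i, j, rfl⟩))
  · exact Ideal.mem_of_dvd _ (hN i j) (Ideal.subset_span (.inr ⟨i, j, rfl⟩))

lemma entriesIdeal_eq_of_associated {M N M' N' : Matrix (Fin n) (Fin n) (FS n)}
    (hM : ∀ i j, Associated (M i j) (M' i j)) (hN : ∀ i j, Associated (N i j) (N' i j)) :
    entriesIdeal n M N = entriesIdeal n M' N' :=
  le_antisymm (entriesIdeal_le_of_dvd (fun i j => (hM i j).dvd') (fun i j => (hN i j).dvd'))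
    (entriesIdeal_le_of_dvd (fun i j => (hM i j).dvd) (fun i j => (hN i j).dvd))

lemma associated_ngDiag_mul_mul_ngDiag_apply (e f : Fin n → ℤ)
    (M : Matrix (Fin n) (Fin n) (FS n)) (i j : Fin n) :
    Associated (M i j) ((ngDiag n e * M * ngDiag n f) i j) := by
  rw [ngDiag_mul_mul_ngDiag_apply]
  exact (associated_unit_mul_right _ _ ((isUnit_ngpow _).map C)).trans
    (associated_mul_unit_right _ _ ((isUnit_ngpow _).map C))

theorem map_Psi_KCH_ideal_of_shift (w : List {k : ℕ // k + 1 < n}) {d : Fin n → ℤ}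
    (hd : ∀ i : Fin n,
      d (permWord n w i) = if (i : ℕ) = 0 then d i + (n - 1) else d i - 1)
    (hpar : Odd ((n : ℤ) + w.length)) :
    Ideal.map (Psi n d)
        (entriesIdeal n
          (AhatS n - Lmat n (w.length : ℤ) * PhiL n w * AS n)
          (AS n - AhatS n * PhiR n w * LmatInv n (w.length : ℤ)))
      = entriesIdeal n
          (gElt n • AhatS n + Lp n (w.length : ℤ) * PhiL n w * AS n)
          (AS n + gElt n • (AhatS n * PhiR n w * LpInv n (w.length : ℤ))) := by
  set W : ℤ := (w.length : ℤ)
  have hgInv : (C (mono 0 0 (-1) 1) : FS n) * gElt n = 1 := by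
    rw [gElt, ← map_mul, mono_gInv_mul_g, map_one]
  have hL : (AhatS n - Lmat n W * PhiL n w * AS n).map (Psi n d) =
      (C (mono 0 0 (-1) 1) : FS n) •
        (ngDiag n d * (gElt n • AhatS n + Lp n W * PhiL n w * AS n) * ngDiag n (-d)) := by
    rw [Matrix.map_sub _ (map_sub (Psi n d)), map_algHom_mul, map_algHom_mul, map_Psi_AhatS,
      map_Lmat, map_Psi_PhiL, map_Psi_AS]
    simp only [Matrix.mul_assoc, ngDiag_neg_mul_cancel_left]
    rw [← Matrix.mul_assoc (Lmat n W), Lmat_mul_ngDiag (e := d ∘ permWord n w) hpar hd]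
    simp only [Matrix.neg_mul, sub_neg_eq_add, Matrix.smul_mul, Matrix.mul_smul, Matrix.add_mul,
      Matrix.mul_add, smul_add, smul_smul, Matrix.mul_assoc, hgInv, one_smul]
  have hR : (AS n - AhatS n * PhiR n w * LmatInv n W).map (Psi n d) =
      ngDiag n d * (AS n + gElt n • (AhatS n * PhiR n w * LpInv n W)) * ngDiag n (-d) := by
    rw [Matrix.map_sub _ (map_sub (Psi n d)), map_algHom_mul, map_algHom_mul, map_Psi_AhatS,
      map_LmatInv, map_Psi_PhiR, map_Psi_AS]
    simp only [Matrix.mul_assoc, ngDiag_neg_mul_cancel_left]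
    rw [ngDiag_neg_mul_LmatInv (e := d ∘ permWord n w) hpar hd]
    simp only [Matrix.mul_neg, sub_neg_eq_add, Matrix.smul_mul, Matrix.mul_smul, Matrix.add_mul,
      Matrix.mul_add, Matrix.mul_assoc]
  rw [map_entriesIdeal, hL, hR]
  refine entriesIdeal_eq_of_associated (fun i j => ?_)
    (fun i j => (associated_ngDiag_mul_mul_ngDiag_apply _ _ _ i j).symm)
  rw [Matrix.smul_apply, smul_eq_mul]
  exact ((associated_ngDiag_mul_mul_ngDiag_apply _ _ _ i j).trans
    (associated_unit_mul_right _ _ (.of_mul_eq_one _ hgInv))).symm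

lemma sign_permWord (w : List {k : ℕ // k + 1 < n}) :
    Perm.sign (permWord n w) = (-1) ^ w.length := by
  induction w with
  | nil => simp [permWord]
  | cons k w ih =>
    have hK : (⟨k.1, by have := k.2; omega⟩ : Fin n) ≠ ⟨k.1 + 1, k.2⟩ := by simp [Fin.ext_iff]
    rw [permWord, map_mul, Perm.sign_swap hK, ih, List.length_cons, pow_succ']

lemma odd_add_length_of_isCycleOn (hn : 2 ≤ n) (w : List {k : ℕ // k + 1 < n})
    (hσ : (permWord n w).IsCycleOn Set.univ) : Odd ((n : ℤ) + w.length) := by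
  have hsign := (sign_permWord w).symm.trans (hσ.sign_of_univ (by simpa using hn))
  rw [Fintype.card_fin] at hsign
  have : ((-1 : ℤˣ)) ^ (n + w.length) = -1 := by
    rw [pow_add, hsign, mul_neg, ← pow_add, Even.neg_one_pow ⟨n, rfl⟩]
  exact_mod_cast (neg_one_pow_eq_neg_one_iff_odd (by decide)).mp this

end KCH

/-- `Ψ` carries the ideal generated by the entries of `τ(Â) − Λ_mat·Φ^L_w·τ(A)` and
`τ(A) − τ(Â)·Φ^R_w·Λ_mat^{−1}` onto the ideal generated by the entries of
`g·τ(Â) + Λ'·Φ^L_w·τ(A)` and `τ(A) + g·τ(Â)·Φ^R_w·(Λ')^{−1}`. -/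
theorem Psi_maps_KCH_ideal (n : ℕ) (hn : 2 ≤ n) (w : List {k : ℕ // k + 1 < n})
    (h : ∀ i j : Fin n, ∃ m : ℕ, ((permWord n w) ^ m) i = j) :
    Ideal.map (Psi n fun i => (Nat.find (h i ⟨0, by omega⟩) : ℤ))
        (entriesIdeal n
          (AhatS n - Lmat n (w.length : ℤ) * PhiL n w * AS n)
          (AS n - AhatS n * PhiR n w * LmatInv n (w.length : ℤ)))
      = entriesIdeal n
          (gElt n • AhatS n + Lp n (w.length : ℤ) * PhiL n w * AS n)
          (AS n + gElt n • (AhatS n * PhiR n w * LpInv n (w.length : ℤ))) := by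
  have hn0 : 0 < n := by omega
  have hσ := Equiv.Perm.isCycleOn_univ_of_exists_pow h
  refine KCH.map_Psi_KCH_ideal_of_shift w (fun i => ?_)
    (KCH.odd_add_length_of_isCycleOn hn w hσ)
  split_ifs with h0
  · obtain rfl : i = ⟨0, hn0⟩ := Fin.ext h0
    have hlast := hσ.find_pow_apply_self_add_one _ (h (permWord n w ⟨0, hn0⟩) ⟨0, hn0⟩)
    have hfirst : Nat.find (h ⟨0, hn0⟩ ⟨0, hn0⟩) = 0 := (Nat.find_eq_zero _).mpr rfl
    rw [Fintype.card_fin] at hlast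
    omega
  · have := Equiv.Perm.find_pow_apply_add_one (fun e => h0 (congrArg Fin.val e))
      (h (permWord n w i) ⟨0, hn0⟩) (h i ⟨0, hn0⟩)
    omega

end
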